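/- For all ω, a > 0 and ε ≥ 0, the relative transparent DtN error satisfies Δ_T(ε,ω) = ε·|sin(ω_ε a)|/√(1 + ε·cos(ω_ε a)²) ≤ ε. In particular the bound is independent of ω. -/

import Mathlib

/-!
At `ε = 0` the map is `-iω`, so the error is `ω ε sin θ / D` with `θ = ω √(1+ε) a` and
`D = √(1+ε) cos θ - i sin θ`. Since `|D|² = (1+ε) cos² θ + sin² θ = 1 + ε cos² θ ≥ 1` and
`|sin θ| ≤ 1`, the relative error is `ε |sin θ| / √(1 + ε cos² θ) ≤ ε`.
-/

open Complex

noncomputable def transparentDtN (ω a e : ℝ) : ℂ :=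
  -Complex.I * ω - (ω : ℂ) * e *
    Complex.sin (ω * Real.sqrt (1 + e) * a) /
    ((Real.sqrt (1 + e) : ℂ) * Complex.cos (ω * Real.sqrt (1 + e) * a) -
      Complex.I * Complex.sin (ω * Real.sqrt (1 + e) * a))

theorem normSq_ofReal_mul_cos_sub_I_mul_sin (s θ : ℝ) :
    normSq ((s : ℂ) * cos θ - I * sin θ) = 1 + (s ^ 2 - 1) * Real.cos θ ^ 2 := by
  rw [← ofReal_cos, ← ofReal_sin, normSq_apply]
  simp only [sub_re, sub_im, mul_re, mul_im, I_re, I_im, ofReal_re, ofReal_im]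
  linear_combination Real.sin_sq_add_cos_sq θ

theorem norm_sqrt_one_add_mul_cos_sub_I_mul_sin {ε : ℝ} (hε : -1 ≤ ε) (θ : ℝ) :
    ‖(√(1 + ε) : ℂ) * cos θ - I * sin θ‖ = √(1 + ε * Real.cos θ ^ 2) := by
  rw [norm_def, normSq_ofReal_mul_cos_sub_I_mul_sin, Real.sq_sqrt (by linarith)]
  ring_nf

theorem norm_transparentDtN_zero (ω a : ℝ) : ‖transparentDtN ω a 0‖ = |ω| := by
  simp [transparentDtN]

theorem transparentDtN_zero_sub (ω a ε : ℝ) :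
    transparentDtN ω a 0 - transparentDtN ω a ε =
      ω * ε * Complex.sin (ω * √(1 + ε) * a : ℝ) /
        ((√(1 + ε) : ℂ) * Complex.cos (ω * √(1 + ε) * a : ℝ) -
          I * Complex.sin (ω * √(1 + ε) * a : ℝ)) := by
  simp only [transparentDtN]
  push_cast
  simp

theorem norm_transparentDtN_zero_sub {ε : ℝ} (hε : 0 ≤ ε) (ω a : ℝ) :
    ‖transparentDtN ω a 0 - transparentDtN ω a ε‖ =
      |ω| * (ε * |Real.sin (ω * √(1 + ε) * a)| /
        √(1 + ε * Real.cos (ω * √(1 + ε) * a) ^ 2)) := by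
  rw [transparentDtN_zero_sub, norm_div, norm_sqrt_one_add_mul_cos_sub_I_mul_sin (by linarith),
    ← ofReal_sin]
  simp only [norm_mul, norm_real, Real.norm_eq_abs, abs_of_nonneg hε, mul_assoc, mul_div_assoc]

theorem mul_abs_div_sqrt_one_add_le {ε x c : ℝ} (hε : 0 ≤ ε) (hx : |x| ≤ 1) (hc : 0 ≤ c) :
    ε * |x| / √(1 + c) ≤ ε :=
  (div_le_self (by positivity) (Real.one_le_sqrt.mpr (by linarith))).trans
    (mul_le_of_le_one_right hε hx)

theorem transparent_DtN_error_bound_general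
    (ω a ε : ℝ) (hω : 0 < ω) (hε : 0 ≤ ε)
    (ωε : ℝ) (hωε : ωε = ω * Real.sqrt (1 + ε))
    (DtNT : ℝ → ℂ)
    (hDtN : ∀ e : ℝ, DtNT e =
      -Complex.I * ω - (ω : ℂ) * e *
        Complex.sin (ω * Real.sqrt (1 + e) * a) /
        ((Real.sqrt (1 + e) : ℂ) * Complex.cos (ω * Real.sqrt (1 + e) * a) -
          Complex.I * Complex.sin (ω * Real.sqrt (1 + e) * a))) :
    ‖DtNT 0 - DtNT ε‖ / ‖DtNT 0‖ =
      ε * |Real.sin (ωε * a)| / Real.sqrt (1 + ε * Real.cos (ωε * a) ^ 2) ∧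
    ε * |Real.sin (ωε * a)| / Real.sqrt (1 + ε * Real.cos (ωε * a) ^ 2) ≤ ε := by
  obtain rfl : DtNT = transparentDtN ω a := funext hDtN
  subst hωε
  refine ⟨?_, mul_abs_div_sqrt_one_add_le hε (Real.abs_sin_le_one _) (by positivity)⟩
  rw [norm_transparentDtN_zero_sub hε, norm_transparentDtN_zero,
    mul_div_cancel_left₀ _ (abs_pos.mpr hω.ne').ne']

/-- The relative transparent DtN error satisfies
`Δ_T(ε,ω) = ε·|sin(ω_ε a)|/√(1 + ε·cos²(ω_ε a)) ≤ ε`, a bound independent of `ω`. -/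
theorem transparent_DtN_error_bound
    (ω a ε : ℝ) (hω : 0 < ω) (ha : 0 < a) (hε : 0 ≤ ε)
    (ωε : ℝ) (hωε : ωε = ω * Real.sqrt (1 + ε))
    (DtNT : ℝ → ℂ)
    (hDtN : ∀ e : ℝ, DtNT e =
      -Complex.I * ω - (ω : ℂ) * e *
        Complex.sin (ω * Real.sqrt (1 + e) * a) /
        ((Real.sqrt (1 + e) : ℂ) * Complex.cos (ω * Real.sqrt (1 + e) * a) -
          Complex.I * Complex.sin (ω * Real.sqrt (1 + e) * a))) :
    ‖DtNT 0 - DtNT ε‖ / ‖DtNT 0‖ =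
      ε * |Real.sin (ωε * a)| / Real.sqrt (1 + ε * Real.cos (ωε * a) ^ 2) ∧
    ε * |Real.sin (ωε * a)| / Real.sqrt (1 + ε * Real.cos (ωε * a) ^ 2) ≤ ε :=
  transparent_DtN_error_bound_general ω a ε hω hε ωε hωε DtNT hDtN
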